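/- Let n ≥ 2 be an integer, and let p, q be real numbers with −1 ≤ p < 0 < q < 1, p + q ≤ 0, and n·p·q + 1 > 0. Let v and k be positive integers satisfying v = n(1−p)(1−q)/(n·p·q + 1) and k·p + (v−k−1)·q + 1 = 0. Let h : [−1,1) → ℝ be continuous, infinitely differentiable on (−1,1), with h^{(j)}(t) ≥ 0 for all j ≥ 1 and t ∈ (−1,1). Then every finite code C ⊆ S^{n-1} with |C| = v such that ⟨x,y⟩ ≥ p for all distinct x, y ∈ C satisfies E_h(C) ≥ v·k·h(p) + v·(v−k−1)·h(q). -/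

import Mathlib

open scoped Classical
open MeasureTheory Finset


/-- The `h`-energy of a finite code `C`: the sum of `h(⟨x,y⟩)` over ordered pairs of
distinct points of `C`. -/
noncomputable def energy {n : ℕ} (h : ℝ → ℝ) (C : Finset (EuclideanSpace ℝ (Fin n))) : ℝ :=
  ∑ x ∈ C, ∑ y ∈ C.erase x, h (inner ℝ x y : ℝ)

lemma iteratedDerivWithin_isOpen' {f : ℝ → ℝ} {s : Set ℝ} (hs : IsOpen s) :
    ∀ (j : ℕ), ∀ x ∈ s, iteratedDerivWithin j f s x = deriv^[j] f x := by
  intro j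
  induction j with
  | zero => intro x hx; simp
  | succ n ih =>
    intro x hx
    rw [iteratedDerivWithin_succ, derivWithin_of_isOpen hs hx,
      Function.iterate_succ_apply']
    exact Filter.EventuallyEq.deriv_eq <|
      Filter.eventuallyEq_of_mem (hs.mem_nhds hx) fun y hy => ih y hy

lemma moment_bounds (n : ℕ) (C : Finset (EuclideanSpace ℝ (Fin n))) (hC : ∀ x ∈ C, ‖x‖ = 1)
    (v : ℕ) (hcard : C.card = v) (hn : 2 ≤ n) :
    ((v:ℝ)^2 / n - v ≤ ∑ x ∈ C, ∑ y ∈ C.erase x, (inner ℝ x y : ℝ)^2)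
    ∧ (-(v:ℝ) ≤ ∑ x ∈ C, ∑ y ∈ C.erase x, (inner ℝ x y : ℝ)) := by
  have hn0 : (0:ℝ) < n := by positivity
  have diag : ∀ x ∈ C, (inner ℝ x x : ℝ) = 1 := by
    intro x hx
    rw [real_inner_self_eq_norm_sq, hC x hx]; norm_num
  have hinner_eq : ∀ x y : EuclideanSpace ℝ (Fin n), (inner ℝ x y : ℝ) = ∑ i, x i * y i := by
    intro x y
    simp [PiLp.inner_apply, RCLike.inner_apply, mul_comm]
  constructor
  · -- second moment
    have key : ((v:ℝ))^2 / n ≤ ∑ x ∈ C, ∑ y ∈ C, (inner ℝ x y : ℝ)^2 := by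
      have e1 : ∑ x ∈ C, ∑ y ∈ C, (inner ℝ x y : ℝ)^2
          = ∑ i : Fin n, ∑ j : Fin n, (∑ x ∈ C, x i * x j)^2 := by
        have e2 : ∀ x y : EuclideanSpace ℝ (Fin n), (inner ℝ x y : ℝ)^2
            = ∑ i : Fin n, ∑ j : Fin n, (x i * x j) * (y i * y j) := by
          intro x y
          rw [hinner_eq, sq, Finset.sum_mul_sum]
          exact Finset.sum_congr rfl fun i _ => Finset.sum_congr rfl fun j _ => by ring
        calc ∑ x ∈ C, ∑ y ∈ C, (inner ℝ x y : ℝ)^2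
            = ∑ x ∈ C, ∑ y ∈ C, ∑ i : Fin n, ∑ j : Fin n, (x i * x j) * (y i * y j) := by
              exact Finset.sum_congr rfl fun x _ => Finset.sum_congr rfl fun y _ => e2 x y
          _ = ∑ x ∈ C, ∑ i : Fin n, ∑ y ∈ C, ∑ j : Fin n, (x i * x j) * (y i * y j) := by
              exact Finset.sum_congr rfl fun x _ => Finset.sum_comm
          _ = ∑ i : Fin n, ∑ x ∈ C, ∑ y ∈ C, ∑ j : Fin n, (x i * x j) * (y i * y j) :=
              Finset.sum_comm
          _ = ∑ i : Fin n, ∑ x ∈ C, ∑ j : Fin n, ∑ y ∈ C, (x i * x j) * (y i * y j) := by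
              exact Finset.sum_congr rfl fun i _ => Finset.sum_congr rfl fun x _ =>
                Finset.sum_comm
          _ = ∑ i : Fin n, ∑ j : Fin n, ∑ x ∈ C, ∑ y ∈ C, (x i * x j) * (y i * y j) := by
              exact Finset.sum_congr rfl fun i _ => Finset.sum_comm
          _ = ∑ i : Fin n, ∑ j : Fin n, (∑ x ∈ C, x i * x j)^2 := by
              refine Finset.sum_congr rfl fun i _ => Finset.sum_congr rfl fun j _ => ?_
              rw [sq, Finset.sum_mul_sum]
      rw [e1]
      have diagsum : ∑ i : Fin n, (∑ x ∈ C, x i * x i) = v := by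
        rw [Finset.sum_comm]
        have hone : ∀ x ∈ C, ∑ i : Fin n, x i * x i = 1 := by
          intro x hx
          have := diag x hx
          rwa [hinner_eq] at this
        rw [Finset.sum_congr rfl hone]
        simp [hcard]
      have step1 : ∑ i : Fin n, (∑ x ∈ C, x i * x i)^2
          ≤ ∑ i : Fin n, ∑ j : Fin n, (∑ x ∈ C, x i * x j)^2 := by
        refine Finset.sum_le_sum fun i _ => ?_
        exact Finset.single_le_sum (f := fun j => (∑ x ∈ C, x i * x j)^2)
          (fun j _ => sq_nonneg _) (Finset.mem_univ i)
      have step2 : ((v:ℝ))^2 ≤ n * ∑ i : Fin n, (∑ x ∈ C, x i * x i)^2 := by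
        have := sq_sum_le_card_mul_sum_sq (s := (Finset.univ : Finset (Fin n)))
          (f := fun i => ∑ x ∈ C, x i * x i)
        rw [diagsum] at this
        simpa using this
      rw [div_le_iff₀ hn0]
      nlinarith [step1, step2]
    have esplit : ∑ x ∈ C, ∑ y ∈ C.erase x, (inner ℝ x y : ℝ)^2
        = (∑ x ∈ C, ∑ y ∈ C, (inner ℝ x y : ℝ)^2) - v := by
      have hesub : ∀ x ∈ C, ∑ y ∈ C.erase x, (inner ℝ x y : ℝ)^2
          = (∑ y ∈ C, (inner ℝ x y : ℝ)^2) - 1 := by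
        intro x hx
        rw [Finset.sum_erase_eq_sub hx, diag x hx]; norm_num
      rw [Finset.sum_congr rfl hesub, Finset.sum_sub_distrib]
      simp [hcard]
    rw [esplit]
    linarith
  · -- first moment
    have key : (0:ℝ) ≤ ∑ x ∈ C, ∑ y ∈ C, (inner ℝ x y : ℝ) := by
      have e1 : ∑ x ∈ C, ∑ y ∈ C, (inner ℝ x y : ℝ) = (inner ℝ (∑ x ∈ C, x) (∑ x ∈ C, x) : ℝ) := by
        rw [sum_inner]
        exact Finset.sum_congr rfl fun x _ => by rw [inner_sum]
      rw [e1]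
      exact real_inner_self_nonneg
    have esplit : ∑ x ∈ C, ∑ y ∈ C.erase x, (inner ℝ x y : ℝ)
        = (∑ x ∈ C, ∑ y ∈ C, (inner ℝ x y : ℝ)) - v := by
      have hesub : ∀ x ∈ C, ∑ y ∈ C.erase x, (inner ℝ x y : ℝ)
          = (∑ y ∈ C, (inner ℝ x y : ℝ)) - 1 := by
        intro x hx
        rw [Finset.sum_erase_eq_sub hx, diag x hx]
      rw [Finset.sum_congr rfl hesub, Finset.sum_sub_distrib]
      simp [hcard]
    rw [esplit]
    linarith
lemma key_analysis (p q : ℝ) (hp : -1 ≤ p) (hpq' : p < q) (hq1 : q < 1) (hpq : p + q ≤ 0)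
    (h : ℝ → ℝ) (hcont : ContinuousOn h (Set.Ico (-1 : ℝ) 1))
    (hsmooth : ContDiffOn ℝ (⊤ : ℕ∞) h (Set.Ioo (-1 : ℝ) 1))
    (hmono : ∀ j : ℕ, 1 ≤ j → ∀ t ∈ Set.Ioo (-1 : ℝ) 1,
      0 ≤ iteratedDerivWithin j h (Set.Ioo (-1 : ℝ) 1) t) :
    ∃ a b c : ℝ, 0 ≤ a ∧ 0 ≤ b ∧ a * p ^ 2 + b * p + c = h p ∧ a * q ^ 2 + b * q + c = h q ∧
      ∀ t, p ≤ t → t < 1 → a * t ^ 2 + b * t + c ≤ h t := by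
  have hO : IsOpen (Set.Ioo (-1 : ℝ) 1) := isOpen_Ioo
  set s : Set ℝ := Set.Ioo (-1 : ℝ) 1 with hs
  have hqs : q ∈ s := ⟨lt_of_le_of_lt hp hpq', hq1⟩
  obtain ⟨h1, hh1⟩ : ∃ f, f = deriv h := ⟨_, rfl⟩
  obtain ⟨h2, hh2⟩ : ∃ f, f = deriv h1 := ⟨_, rfl⟩
  obtain ⟨h3, hh3⟩ : ∃ f, f = deriv h2 := ⟨_, rfl⟩
  have hc1 : ContDiffOn ℝ (⊤ : ℕ∞) h1 s := hh1 ▸ hsmooth.deriv_of_isOpen hO (by simp)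
  have hc2 : ContDiffOn ℝ (⊤ : ℕ∞) h2 s := hh2 ▸ hc1.deriv_of_isOpen hO (by simp)
  have hdiff : ∀ x ∈ s, HasDerivAt h (h1 x) x := fun x hx => hh1 ▸
    ((hsmooth.differentiableOn (by simp) x hx).differentiableAt (hO.mem_nhds hx)).hasDerivAt
  have hdiff1 : ∀ x ∈ s, HasDerivAt h1 (h2 x) x := fun x hx => hh2 ▸
    ((hc1.differentiableOn (by simp) x hx).differentiableAt (hO.mem_nhds hx)).hasDerivAt
  have hdiff2 : ∀ x ∈ s, HasDerivAt h2 (h3 x) x := fun x hx => hh3 ▸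
    ((hc2.differentiableOn (by simp) x hx).differentiableAt (hO.mem_nhds hx)).hasDerivAt
  have hiter : ∀ j : ℕ, ∀ x ∈ s, iteratedDerivWithin j h s x = deriv^[j] h x :=
    iteratedDerivWithin_isOpen' hO
  have h1n : ∀ x ∈ s, 0 ≤ h1 x := by
    intro x hx; have := hmono 1 le_rfl x hx
    rw [hiter 1 x hx] at this; simpa [hh1] using this
  have h2n : ∀ x ∈ s, 0 ≤ h2 x := by
    intro x hx; have := hmono 2 (by norm_num) x hx
    rw [hiter 2 x hx] at this
    simpa [hh1, hh2, Function.iterate_succ_apply'] using this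
  have h3n : ∀ x ∈ s, 0 ≤ h3 x := by
    intro x hx; have := hmono 3 (by norm_num) x hx
    rw [hiter 3 x hx] at this
    simpa [hh1, hh2, hh3, Function.iterate_succ_apply'] using this
  have hintS : interior s = s := hO.interior_eq
  have hm1 : MonotoneOn h1 s := by
    apply monotoneOn_of_deriv_nonneg (convex_Ioo _ _) (hc1.continuousOn)
    · rw [hintS]; exact hc1.differentiableOn (by simp)
    · rw [hintS]; intro x hx; rw [(hdiff1 x hx).deriv]; exact h2n x hx
  have hm2 : MonotoneOn h2 s := by
    apply monotoneOn_of_deriv_nonneg (convex_Ioo _ _) (hc2.continuousOn)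
    · rw [hintS]; exact hc2.differentiableOn (by simp)
    · rw [hintS]; intro x hx; rw [(hdiff2 x hx).deriv]; exact h3n x hx
  have hIccs : Set.Icc p q ⊆ Set.Ico (-1 : ℝ) 1 :=
    fun x hx => ⟨le_trans hp hx.1, lt_of_le_of_lt hx.2 hq1⟩
  have hIoos : Set.Ioo p q ⊆ s := fun x hx => ⟨lt_of_le_of_lt hp hx.1, lt_trans hx.2 hq1⟩
  have hqp : (0:ℝ) < q - p := by linarith
  have hmh : MonotoneOn h (Set.Icc p q) := by
    apply monotoneOn_of_deriv_nonneg (convex_Icc _ _) (hcont.mono hIccs)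
    · rw [interior_Icc]
      exact fun x hx => ((hsmooth.differentiableOn (by simp) x (hIoos hx)).differentiableAt
        (hO.mem_nhds (hIoos hx))).differentiableWithinAt
    · rw [interior_Icc]; intro x hx
      rw [(hdiff x (hIoos hx)).deriv]; exact h1n x (hIoos hx)
  obtain ⟨d1, hd1⟩ : ∃ d, d = (h q - h p) / (q - p) := ⟨_, rfl⟩
  obtain ⟨ξ, hξ, hξd⟩ := exists_deriv_eq_slope h hpq' (hcont.mono hIccs)
    (fun x hx => ((hsmooth.differentiableOn (by simp) x (hIoos hx)).differentiableAt
      (hO.mem_nhds (hIoos hx))).differentiableWithinAt)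
  have hξs : ξ ∈ s := hIoos hξ
  have hd1q : d1 ≤ h1 q := by
    rw [hd1, ← hξd, ← hh1]; exact hm1 hξs hqs (le_of_lt hξ.2)
  have hd1n : 0 ≤ d1 := by
    rw [hd1]
    apply div_nonneg _ (le_of_lt hqp)
    have := hmh (Set.left_mem_Icc.2 (le_of_lt hpq')) (Set.right_mem_Icc.2 (le_of_lt hpq'))
      (le_of_lt hpq')
    linarith
  obtain ⟨a, ha⟩ : ∃ a : ℝ, a = (h1 q - d1) / (q - p) := ⟨_, rfl⟩
  obtain ⟨b, hb⟩ : ∃ b : ℝ, b = d1 - a * (p + q) := ⟨_, rfl⟩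
  obtain ⟨c, hc⟩ : ∃ c : ℝ, c = h p - d1 * p + a * p * q := ⟨_, rfl⟩
  have han : 0 ≤ a := ha ▸ div_nonneg (by linarith) (le_of_lt hqp)
  have hbn : 0 ≤ b := by
    rw [hb]; nlinarith [mul_nonneg han (neg_nonneg.2 hpq)]
  have haqp : a * (q - p) = h1 q - d1 := by rw [ha]; field_simp
  have hd1qp : d1 * (q - p) = h q - h p := by rw [hd1]; field_simp
  have hHp : a * p ^ 2 + b * p + c = h p := by rw [hb, hc]; ring
  have hHq : a * q ^ 2 + b * q + c = h q := by
    rw [hb, hc]; linear_combination hd1qp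
  refine ⟨a, b, c, han, hbn, hHp, hHq, ?_⟩
  obtain ⟨g, hgdef⟩ : ∃ g : ℝ → ℝ, g = fun t => h t - (a * t ^ 2 + b * t + c) := ⟨_, rfl⟩
  obtain ⟨φ, hφdef⟩ : ∃ φ : ℝ → ℝ, φ = fun x => h1 x - (2 * a * x + b) := ⟨_, rfl⟩
  have hφq : φ q = 0 := by
    rw [hφdef]; simp only [hb]; linear_combination -haqp
  have hgd : ∀ x ∈ s, HasDerivAt g (φ x) x := by
    intro x hx
    have hpoly : HasDerivAt (fun t : ℝ => a * t ^ 2 + b * t + c) (2 * a * x + b) x := by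
      have := (((hasDerivAt_pow 2 x).const_mul a).add ((hasDerivAt_id x).const_mul b)).add_const c
      exact this.congr_deriv (by rw [show (2:ℕ) - 1 = 1 from rfl]; push_cast; ring)
    rw [hgdef, hφdef]
    exact (hdiff x hx).sub hpoly
  have hgcont : ContinuousOn g (Set.Ico (-1:ℝ) 1) := by
    rw [hgdef]; apply hcont.sub; fun_prop
  have hgp : g p = 0 := by rw [hgdef]; simp only; rw [hHp]; ring
  have hgq : g q = 0 := by rw [hgdef]; simp only; rw [hHq]; ring
  obtain ⟨c₁, hc₁, hc₁d⟩ := exists_deriv_eq_zero hpq'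
    (hgcont.mono hIccs) (by rw [hgp, hgq])
  have hc₁s : c₁ ∈ s := hIoos hc₁
  have hφc₁ : φ c₁ = 0 := by rw [← (hgd c₁ hc₁s).deriv]; exact hc₁d
  have hφcont : ContinuousOn φ s := by
    rw [hφdef]; apply (hc1.continuousOn).sub; fun_prop
  have hIccc₁q : Set.Icc c₁ q ⊆ s := fun x hx =>
    ⟨lt_of_lt_of_le hc₁s.1 hx.1, lt_of_le_of_lt hx.2 hq1⟩
  obtain ⟨c₂, hc₂, hc₂d⟩ := exists_deriv_eq_zero hc₁.2
    (hφcont.mono hIccc₁q) (by rw [hφc₁, hφq])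
  have hc₂s : c₂ ∈ s := hIccc₁q ⟨le_of_lt hc₂.1, le_of_lt hc₂.2⟩
  have hφd : ∀ x ∈ s, HasDerivAt φ (h2 x - 2 * a) x := by
    intro x hx
    have hlin : HasDerivAt (fun y : ℝ => 2 * a * y + b) (2 * a) x := by
      simpa using ((hasDerivAt_id x).const_mul (2*a)).add_const b
    rw [hφdef]
    exact (hdiff1 x hx).sub hlin
  have hh2c₂ : h2 c₂ = 2 * a := by
    have hdd := (hφd c₂ hc₂s).deriv
    rw [hc₂d] at hdd; linarith
  -- sign of φ
  have hsub2 : Set.Ico c₂ (1:ℝ) ⊆ s := fun x hx => ⟨lt_of_lt_of_le hc₂s.1 hx.1, hx.2⟩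
  have hsub1 : Set.Ioc (-1:ℝ) c₂ ⊆ s := fun x hx => ⟨hx.1, lt_of_le_of_lt hx.2 hc₂s.2⟩
  have hφmono : MonotoneOn φ (Set.Ico c₂ 1) := by
    apply monotoneOn_of_deriv_nonneg (convex_Ico _ _) (hφcont.mono hsub2)
    · rw [interior_Ico]
      intro x hx
      exact ((hφd x (hsub2 (Set.mem_Ico_of_Ioo hx))).differentiableAt).differentiableWithinAt
    · rw [interior_Ico]; intro x hx
      have hxs : x ∈ s := hsub2 (Set.mem_Ico_of_Ioo hx)
      rw [(hφd x hxs).deriv]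
      have := hm2 hc₂s hxs (le_of_lt hx.1)
      linarith [hh2c₂ ▸ this]
  have hφanti : AntitoneOn φ (Set.Ioc (-1:ℝ) c₂) := by
    apply antitoneOn_of_deriv_nonpos (convex_Ioc _ _) (hφcont.mono hsub1)
    · rw [interior_Ioc]
      intro x hx
      exact ((hφd x (hsub1 (Set.mem_Ioc_of_Ioo hx))).differentiableAt).differentiableWithinAt
    · rw [interior_Ioc]; intro x hx
      have hxs : x ∈ s := hsub1 (Set.mem_Ioc_of_Ioo hx)
      rw [(hφd x hxs).deriv]
      have := hm2 hxs hc₂s (le_of_lt hx.2)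
      linarith [hh2c₂ ▸ this]
  -- now the main case analysis
  intro t hpt ht1
  rw [show a * t ^ 2 + b * t + c ≤ h t ↔ 0 ≤ g t by rw [hgdef]; simp only; constructor <;> intro <;> linarith]
  rcases le_or_gt t c₁ with htc₁ | htc₁
  · -- t ∈ [p, c₁] : g monotone there
    have hmg : MonotoneOn g (Set.Icc p c₁) := by
      apply monotoneOn_of_deriv_nonneg (convex_Icc _ _)
        (hgcont.mono (fun x hx => ⟨le_trans hp hx.1, lt_of_le_of_lt hx.2 hc₁s.2⟩))
      · rw [interior_Icc]
        intro x hx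
        have hxs : x ∈ s := ⟨lt_of_le_of_lt hp hx.1, lt_trans hx.2 hc₁s.2⟩
        exact ((hgd x hxs).differentiableAt).differentiableWithinAt
      · rw [interior_Icc]; intro x hx
        have hxs : x ∈ s := ⟨lt_of_le_of_lt hp hx.1, lt_trans hx.2 hc₁s.2⟩
        rw [(hgd x hxs).deriv]
        have hx1 : x ∈ Set.Ioc (-1:ℝ) c₂ := ⟨hxs.1, le_of_lt (lt_trans hx.2 hc₂.1)⟩
        have hc₁1 : c₁ ∈ Set.Ioc (-1:ℝ) c₂ := ⟨hc₁s.1, le_of_lt hc₂.1⟩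
        have := hφanti hx1 hc₁1 (le_of_lt hx.2)
        rw [hφc₁] at this; exact this
    have := hmg (Set.left_mem_Icc.2 (le_trans hpt htc₁)) ⟨hpt, htc₁⟩ hpt
    rw [hgp] at this; exact this
  · rcases le_or_gt t q with htq | htq
    · -- t ∈ (c₁, q] : g antitone on [c₁, q]
      have hag : AntitoneOn g (Set.Icc c₁ q) := by
        apply antitoneOn_of_deriv_nonpos (convex_Icc _ _)
          (hgcont.mono (fun x hx => ⟨le_of_lt (lt_of_lt_of_le hc₁s.1 hx.1), lt_of_le_of_lt hx.2 hq1⟩))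
        · rw [interior_Icc]
          intro x hx
          have hxs : x ∈ s := ⟨lt_trans hc₁s.1 hx.1, lt_trans hx.2 hq1⟩
          exact ((hgd x hxs).differentiableAt).differentiableWithinAt
        · rw [interior_Icc]; intro x hx
          have hxs : x ∈ s := ⟨lt_trans hc₁s.1 hx.1, lt_trans hx.2 hq1⟩
          rw [(hgd x hxs).deriv]
          rcases le_or_gt x c₂ with hxc₂ | hxc₂
          · have := hφanti ⟨hc₁s.1, le_of_lt hc₂.1⟩ ⟨hxs.1, hxc₂⟩ (le_of_lt hx.1)
            rw [hφc₁] at this; exact this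
          · have := hφmono ⟨le_of_lt hxc₂, hxs.2⟩ ⟨le_of_lt hc₂.2, hq1⟩ (le_of_lt hx.2)
            rw [hφq] at this; exact this
      have := hag ⟨le_of_lt htc₁, htq⟩ (Set.right_mem_Icc.2 (le_trans (le_of_lt htc₁) htq)) htq
      rw [hgq] at this; exact this
    · -- t ∈ (q, 1) : g monotone on [q, t]
      have hmg : MonotoneOn g (Set.Icc q t) := by
        apply monotoneOn_of_deriv_nonneg (convex_Icc _ _)
          (hgcont.mono (fun x hx => ⟨le_of_lt (lt_of_lt_of_le hqs.1 hx.1), lt_of_le_of_lt hx.2 ht1⟩))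
        · rw [interior_Icc]
          intro x hx
          have hxs : x ∈ s := ⟨lt_trans hqs.1 hx.1, lt_trans hx.2 ht1⟩
          exact ((hgd x hxs).differentiableAt).differentiableWithinAt
        · rw [interior_Icc]; intro x hx
          have hxs : x ∈ s := ⟨lt_trans hqs.1 hx.1, lt_trans hx.2 ht1⟩
          rw [(hgd x hxs).deriv]
          have := hφmono ⟨le_of_lt hc₂.2, hq1⟩ ⟨le_trans (le_of_lt hc₂.2) (le_of_lt hx.1), hxs.2⟩
            (le_of_lt hx.1)
          rw [hφq] at this; exact this
      have := hmg (Set.left_mem_Icc.2 (le_of_lt htq)) ⟨le_of_lt htq, le_rfl⟩ (le_of_lt htq)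
      rw [hgq] at this; exact this

theorem statement19 (n : ℕ) (hn : 2 ≤ n) (p q : ℝ)
    (hp : -1 ≤ p) (hp0 : p < 0) (hq0 : 0 < q) (hq1 : q < 1)
    (hpq : p + q ≤ 0) (hnpq : 0 < (n : ℝ) * p * q + 1)
    (v k : ℕ) (hv : 0 < v) (hk : 0 < k)
    (hveq : (v : ℝ) = (n : ℝ) * (1 - p) * (1 - q) / ((n : ℝ) * p * q + 1))
    (hkeq : (k : ℝ) * p + ((v : ℝ) - (k : ℝ) - 1) * q + 1 = 0)
    (h : ℝ → ℝ) (hcont : ContinuousOn h (Set.Ico (-1 : ℝ) 1))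
    (hsmooth : ContDiffOn ℝ (⊤ : ℕ∞) h (Set.Ioo (-1 : ℝ) 1))
    (hmono : ∀ j : ℕ, 1 ≤ j → ∀ t ∈ Set.Ioo (-1 : ℝ) 1,
      0 ≤ iteratedDerivWithin j h (Set.Ioo (-1 : ℝ) 1) t)
    (C : Finset (EuclideanSpace ℝ (Fin n))) (hC : ∀ x ∈ C, ‖x‖ = 1)
    (hcard : C.card = v)
    (hinner : ∀ x ∈ C, ∀ y ∈ C, x ≠ y → p ≤ (inner ℝ x y : ℝ)) :
    (v : ℝ) * (k : ℝ) * h p + (v : ℝ) * ((v : ℝ) - (k : ℝ) - 1) * h q ≤ energy h C := by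
  have hn0 : (0:ℝ) < n := by positivity
  have hplq : p < q := lt_trans hp0 hq0
  obtain ⟨a, b, c, han, hbn, hHp, hHq, hH⟩ :=
    key_analysis p q hp hplq hq1 hpq h hcont hsmooth hmono
  obtain ⟨hS2, hS1⟩ := moment_bounds n C hC v hcard hn
  set S2 : ℝ := ∑ x ∈ C, ∑ y ∈ C.erase x, (inner ℝ x y : ℝ)^2 with hS2def
  set S1 : ℝ := ∑ x ∈ C, ∑ y ∈ C.erase x, (inner ℝ x y : ℝ) with hS1def
  -- inner products of distinct points lie in [p, 1)
  have hmem : ∀ x ∈ C, ∀ y ∈ C.erase x, p ≤ (inner ℝ x y : ℝ) ∧ (inner ℝ x y : ℝ) < 1 := by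
    intro x hx y hy
    have hyC : y ∈ C := Finset.mem_of_mem_erase hy
    have hne : y ≠ x := Finset.ne_of_mem_erase hy
    refine ⟨hinner x hx y hyC hne.symm, ?_⟩
    have hsub : x - y ≠ 0 := sub_ne_zero.mpr hne.symm
    have hpos : (0:ℝ) < ‖x - y‖^2 := pow_pos (norm_pos_iff.mpr hsub) 2
    have hexp : ‖x - y‖^2 = 2 - 2 * (inner ℝ x y : ℝ) := by
      rw [@norm_sub_sq_real, hC x hx, hC y hyC]; ring
    linarith [hexp ▸ hpos]
  -- pointwise comparison of energies
  have comp : ∑ x ∈ C, ∑ y ∈ C.erase x,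
      (a * (inner ℝ x y : ℝ)^2 + b * (inner ℝ x y : ℝ) + c) ≤ energy h C := by
    unfold energy
    refine Finset.sum_le_sum fun x hx => Finset.sum_le_sum fun y hy => ?_
    obtain ⟨h1, h2⟩ := hmem x hx y hy
    exact hH _ h1 h2
  -- expanding the quadratic energy
  have expand : ∑ x ∈ C, ∑ y ∈ C.erase x,
      (a * (inner ℝ x y : ℝ)^2 + b * (inner ℝ x y : ℝ) + c)
      = a * S2 + b * S1 + c * ((v:ℝ) * ((v:ℝ) - 1)) := by
    have hrow : ∀ x ∈ C, ∑ y ∈ C.erase x, (a * (inner ℝ x y : ℝ)^2 + b * (inner ℝ x y : ℝ) + c)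
        = a * (∑ y ∈ C.erase x, (inner ℝ x y : ℝ)^2) + b * (∑ y ∈ C.erase x, (inner ℝ x y : ℝ))
          + ((v:ℝ) - 1) * c := by
      intro x hx
      rw [Finset.sum_add_distrib, Finset.sum_add_distrib, Finset.sum_const,
        Finset.card_erase_of_mem hx, hcard, ← Finset.mul_sum, ← Finset.mul_sum, nsmul_eq_mul,
        Nat.cast_sub hv, Nat.cast_one]
    rw [Finset.sum_congr rfl hrow, Finset.sum_add_distrib, Finset.sum_add_distrib,
      ← Finset.mul_sum, ← Finset.mul_sum, Finset.sum_const, hcard, nsmul_eq_mul,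
      hS2def, hS1def]
    ring
  -- algebraic identities from the design conditions
  have hE2 : (v:ℝ) * ((n:ℝ) * p * q + 1) = (n:ℝ) * (1 - p) * (1 - q) := by
    rw [hveq]; field_simp
  have I2 : (n:ℝ) * ((k:ℝ) * p^2 + ((v:ℝ) - k - 1) * q^2) + n = v := by
    linear_combination ((n:ℝ) * (p + q)) * hkeq - hE2
  -- second moment term
  have hvα : (v:ℝ) * ((k:ℝ) * p^2 + ((v:ℝ) - k - 1) * q^2) ≤ S2 := by
    have e1 : (n:ℝ) * ((v:ℝ) * ((k:ℝ) * p^2 + ((v:ℝ) - k - 1) * q^2)) = (v:ℝ)^2 - n * v := by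
      linear_combination (v:ℝ) * I2
    have hS2' : (v:ℝ)^2 ≤ (S2 + v) * n := (div_le_iff₀ hn0).mp (by linarith)
    have : (n:ℝ) * ((v:ℝ) * ((k:ℝ) * p^2 + ((v:ℝ) - k - 1) * q^2)) ≤ n * S2 := by linarith
    exact le_of_mul_le_mul_left this hn0
  have hvβ : (v:ℝ) * ((k:ℝ) * p + ((v:ℝ) - k - 1) * q) = -(v:ℝ) := by
    linear_combination (v:ℝ) * hkeq
  -- final assembly
  have ea : a * ((v:ℝ) * ((k:ℝ) * p^2 + ((v:ℝ) - k - 1) * q^2)) ≤ a * S2 :=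
    mul_le_mul_of_nonneg_left hvα han
  have eb : b * (-(v:ℝ)) ≤ b * S1 := mul_le_mul_of_nonneg_left hS1 hbn
  have eq1 : (v:ℝ) * k * (a * p^2 + b * p + c) + (v:ℝ) * ((v:ℝ) - k - 1) * (a * q^2 + b * q + c)
      = a * ((v:ℝ) * ((k:ℝ) * p^2 + ((v:ℝ) - k - 1) * q^2))
        + b * ((v:ℝ) * ((k:ℝ) * p + ((v:ℝ) - k - 1) * q))
        + c * ((v:ℝ) * ((v:ℝ) - 1)) := by ring
  rw [expand] at comp
  rw [← hHp, ← hHq, eq1, hvβ]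
  linarith [ea, eb, comp]
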